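/- arXiv:2310.02073 — 2 statements merged into one kernel-verified Lean document; each statement's English description precedes it below -/
import Mathlib

section
/- Let p be an odd prime. A nontrivial cyclic p-group is not η-capable: there is no finite p-group P with P/η(P) cyclic and nontrivial. -/
/-!
Modulo `P^p` the subgroup `η(P)` is central, because `[η(P), P] ≤ η(P)^p ≤ P^p`, and the quotient
by it is cyclic; a group that is cyclic over a central subgroup is abelian, so `[P, P] ≤ P^p`.
Thus `P` is powerful, i.e. powerfully embedded in itself, whence `η(P) = P` and `P/η(P)` is trivial.
-/

/-- The subgroup generated by `p`-th powers of elements of `N`. -/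
def pPow {G : Type*} [Group G] (p : ℕ) (N : Subgroup G) : Subgroup G :=
  Subgroup.closure ((fun x => x ^ p) '' (N : Set G))

theorem pPow_normal {G : Type*} [Group G] (p : ℕ) {N : Subgroup G} (hN : N.Normal) :
    (pPow p N).Normal := by
  constructor
  intro x hx g
  have h : pPow p N ≤ Subgroup.comap (MulAut.conj g).toMonoidHom (pPow p N) := by
    rw [pPow, Subgroup.closure_le]
    rintro - ⟨n, hn, rfl⟩
    have : (MulAut.conj g) (n ^ p) = (g * n * g⁻¹) ^ p := by
      simp [MulAut.conj_apply, conj_pow]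
    refine Subgroup.mem_comap.2 ?_
    show (MulAut.conj g) (n ^ p) ∈ _
    rw [this]
    exact Subgroup.subset_closure ⟨g * n * g⁻¹, hN.conj_mem n hn g, rfl⟩
  simpa using h hx

theorem normal_sSup {G : Type*} [Group G] {S : Set (Subgroup G)}
    (hS : ∀ N ∈ S, N.Normal) : (sSup S).Normal := by
  constructor
  intro x hx g
  have h : sSup S ≤ Subgroup.comap (MulAut.conj g).toMonoidHom (sSup S) := by
    refine sSup_le fun N hN => le_trans ?_ (Subgroup.comap_mono (le_sSup hN))
    intro n hn
    exact Subgroup.mem_comap.2 (by simpa using (hS N hN).conj_mem n hn g)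
  simpa using h hx

/-- The upper η-series: `η₀ = 1`, and `η_{i+1}/η_i = η(G/η_i)` is the product of all
powerfully embedded subgroups of `G/η_i`. -/
def etaUp (p : ℕ) (G : Type*) [Group G] : ℕ → Subgroup G
  | 0 => ⊥
  | i + 1 => sSup {N : Subgroup G | N.Normal ∧ ⁅N, (⊤ : Subgroup G)⁆ ≤ pPow p N ⊔ etaUp p G i}

instance etaUp_normal (p : ℕ) (G : Type*) [Group G] (i : ℕ) : (etaUp p G i).Normal := by
  cases i with
  | zero => show (⊥ : Subgroup G).Normal; infer_instance
  | succ i => exact normal_sSup fun N hN => hN.1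

/-- The powerful class of `G`. -/
noncomputable def pwc (p : ℕ) (G : Type*) [Group G] : ℕ := sInf {k | etaUp p G k = ⊤}

/-- Iterated commutator `[N, G, G, ..., G]` with `i` copies of `G`. -/
def itComm {G : Type*} [Group G] (N : Subgroup G) : ℕ → Subgroup G
  | 0 => N
  | i + 1 => ⁅itComm N i, (⊤ : Subgroup G)⁆

/-- `N` is PF-embedded in `G`: it admits a potent filtration. -/
def PFEmbedded {G : Type*} [Group G] (p : ℕ) (N : Subgroup G) : Prop :=
  ∃ (s : ℕ) (M : ℕ → Subgroup G), M 0 = N ∧ M s = ⊥ ∧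
    (∀ i, M (i + 1) ≤ M i) ∧ (∀ i, (M i).Normal) ∧
    (∀ i, ⁅M i, (⊤ : Subgroup G)⁆ ≤ M (i + 1)) ∧
    (∀ i, itComm (M i) (p - 1) ≤ pPow p (M (i + 1)))

open Subgroup QuotientGroup

lemma pPow_mono {G : Type*} [Group G] (p : ℕ) {N M : Subgroup G} (h : N ≤ M) :
    pPow p N ≤ pPow p M :=
  closure_mono (Set.image_mono h)

instance pPow_top_normal {G : Type*} [Group G] (p : ℕ) : (pPow p (⊤ : Subgroup G)).Normal :=
  pPow_normal p normal_top

lemma commutator_top_le_iff_le_comap_center {G : Type*} [Group G] (H L : Subgroup G) [L.Normal] :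
    ⁅H, (⊤ : Subgroup G)⁆ ≤ L ↔ H ≤ (center (G ⧸ L)).comap (mk' L) := by
  rw [← Subgroup.upperCentralSeriesStep_eq_comap_center, commutator_le]
  simp only [mem_top, forall_const]
  exact Iff.rfl

lemma commutator_le_of_isCyclic_quotient {G : Type*} [Group G] {N L : Subgroup G} [N.Normal]
    [L.Normal] [IsCyclic (G ⧸ N)] (h : ⁅N, (⊤ : Subgroup G)⁆ ≤ L) : commutator G ≤ L := by
  -- `C / L` is the centre of `G / L`, and `G / C` is a quotient of the cyclic group `G / N`.
  set C := (center (G ⧸ L)).comap (mk' L)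
  have hNC : N ≤ C := (commutator_top_le_iff_le_comap_center N L).1 h
  have hLC : L ≤ C := (commutator_top_le_iff_le_comap_center L L).1 (commutator_le_left L ⊤)
  have : IsCyclic (G ⧸ C) := isCyclic_of_surjective (map N C (MonoidHom.id G) hNC)
    (map_surjective_of_surjective N C _ mk_surjective hNC)
  have hker : (map L C (MonoidHom.id G) hLC).ker ≤ center (G ⧸ L) := by
    rintro ⟨g⟩ hg
    exact (eq_one_iff g).1 hg
  exact Normal.quotient_commutative_iff_commutator_le.1
    ((map L C (MonoidHom.id G) hLC).isMulCommutative_of_isCyclic_of_ker_le_center hker)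

lemma commutator_etaUp_one_le_pPow (p : ℕ) (G : Type*) [Group G] :
    ⁅etaUp p G 1, (⊤ : Subgroup G)⁆ ≤ pPow p ⊤ := by
  rw [commutator_top_le_iff_le_comap_center]
  refine sSup_le fun N hN => (commutator_top_le_iff_le_comap_center N _).1 ?_
  exact hN.2.trans (sup_le (pPow_mono p le_top) bot_le)

lemma etaUp_one_eq_top_of_commutator_le_pPow {p : ℕ} {G : Type*} [Group G]
    (h : commutator G ≤ pPow p ⊤) : etaUp p G 1 = ⊤ :=
  top_le_iff.1 (le_sSup ⟨normal_top, h.trans le_sup_left⟩)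

theorem cyclic_not_eta_capable_general {p : ℕ}
    {P : Type*} [Group P]
    (hcyc : IsCyclic (P ⧸ etaUp p P 1)) (hnt : Nontrivial (P ⧸ etaUp p P 1)) : False := by
  have hη : etaUp p P 1 = ⊤ := etaUp_one_eq_top_of_commutator_le_pPow
    (commutator_le_of_isCyclic_quotient (commutator_etaUp_one_le_pPow p P))
  rw [hη] at hnt
  exact not_nontrivial_iff_subsingleton.2 subsingleton_quotient_top hnt

/-- a nontrivial cyclic group is not η-capable: there is no finite `p`-group `P`
with `P/η(P)` cyclic and nontrivial. -/
theorem cyclic_not_eta_capable {p : ℕ} (hp : p.Prime) (hodd : Odd p)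
    {P : Type*} [Group P] [Finite P] (hP : IsPGroup p P)
    (hcyc : IsCyclic (P ⧸ etaUp p P 1)) (hnt : Nontrivial (P ⧸ etaUp p P 1)) : False :=
  cyclic_not_eta_capable_general hcyc hnt
end

section
/- Let p be an odd prime. Every finite p-group of powerful class less than p is a PF-group, i.e., it admits a potent filtration of itself. -/
/-!
Write `λ(X) = X^p [X, G]` and let `1 = η₀ ≤ η₁ ≤ ⋯ ≤ η_c = G` be the upper η-series, so that
`[η_j, G] ≤ η_j^p η_{j-1}`. The filtration is `M₀ = η_c`, `M_{i+1} = λ(M_i) η_{c-i-1}`: it is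
central by construction, and it reaches `1` because in a finite `p`-group `λ(X) = X` forces
`X = 1` (a Frattini argument).

For odd `p` the identity `[x^p, y] = [x, y]^p [[x, y]⁻¹, x]^(p choose 2)`, valid modulo
`[X, G]^p [X, G, G, G]`, gives `[X^p, mG] ≤ [X, mG]^p [X, (m+2)G]`. Feeding this and the
powerful embedding of `η_j / η_{j-1}` into an induction on `j` and `i` (and downwards on `m`, using
nilpotency) yields `[M_i, (m+1)G] ≤ M_{i+m}^p η_{c-i-m-1}`. For `m = p - 2` the last factor is
`η₀ = 1` since `c < p`, and `M_{i+p-2} ≤ M_{i+1}` since `p ≥ 3`.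
-/

section PowerSubgroup

open Subgroup

variable {G : Type*} [Group G] {p : ℕ}

instance {N : Subgroup G} [hN : N.Normal] : (pPow p N).Normal := pPow_normal p hN

theorem pow_mem_pPow {N : Subgroup G} {x : G} (hx : x ∈ N) : x ^ p ∈ pPow p N :=
  subset_closure ⟨x, hx, rfl⟩

theorem pPow_le_iff {N T : Subgroup G} : pPow p N ≤ T ↔ ∀ x ∈ N, x ^ p ∈ T :=
  (closure_le _).trans Set.image_subset_iff

theorem pPow_le_self (N : Subgroup G) : pPow p N ≤ N :=
  pPow_le_iff.2 fun _ hx => N.pow_mem hx p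

theorem pPow_mono_s12 : Monotone (pPow (G := G) p) :=
  fun _ _ h => pPow_le_iff.2 fun _ hx => pow_mem_pPow (h hx)

theorem map_pPow {H : Type*} [Group H] (f : G →* H) (N : Subgroup G) :
    (pPow p N).map f = pPow p (N.map f) := by
  rw [pPow, MonoidHom.map_closure, pPow, coe_map, Set.image_image, Set.image_image]
  simp only [map_pow]

theorem exists_pow_eq_of_mem_pPow {A : Subgroup G} (hA : ∀ a ∈ A, ∀ b ∈ A, Commute a b)
    {y : G} (hy : y ∈ pPow p A) : ∃ b ∈ A, b ^ p = y := by
  induction hy using closure_induction with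
  | mem _ hx => exact hx
  | one => exact ⟨1, A.one_mem, one_pow p⟩
  | mul _ _ _ _ hx hy =>
    obtain ⟨a, ha, rfl⟩ := hx
    obtain ⟨b, hb, rfl⟩ := hy
    exact ⟨a * b, A.mul_mem ha hb, (hA a ha b hb).mul_pow p⟩
  | inv _ _ hx =>
    obtain ⟨a, ha, rfl⟩ := hx
    exact ⟨a⁻¹, A.inv_mem ha, inv_pow a p⟩

theorem eq_bot_of_le_pPow_of_commute [Finite G] (hp : p.Prime) (hG : IsPGroup p G)
    {A : Subgroup G} (hA : ∀ a ∈ A, ∀ b ∈ A, Commute a b) (hle : A ≤ pPow p A) : A = ⊥ := by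
  have : Fact p.Prime := ⟨hp⟩
  have hroot : ∀ n, ∀ a ∈ A, ∃ b ∈ A, b ^ p ^ n = a := by
    intro n
    induction n with
    | zero => exact fun a ha => ⟨a, ha, pow_one a⟩
    | succ n ih =>
      intro a ha
      obtain ⟨b, hb, rfl⟩ := exists_pow_eq_of_mem_pPow hA (hle ha)
      obtain ⟨c, hc, rfl⟩ := ih b hb
      exact ⟨c, hc, by rw [← pow_mul, pow_succ]⟩
  obtain ⟨n, hn⟩ := IsPGroup.iff_card.mp hG
  refine eq_bot_iff.2 fun a ha => ?_
  obtain ⟨b, -, rfl⟩ := hroot n a ha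
  rw [mem_bot, ← hn, pow_card_eq_one']

end PowerSubgroup

section IteratedCommutator

open Subgroup

variable {G : Type*} [Group G]

theorem commutator_top_le_iff {H N : Subgroup G} [N.Normal] :
    ⁅H, ⊤⁆ ≤ N ↔ H ≤ N.upperCentralSeriesStep := by
  simp only [commutator_le, mem_top, forall_const]
  rfl

theorem commutator_sup_top_le (A B : Subgroup G) [A.Normal] [B.Normal] :
    ⁅A ⊔ B, (⊤ : Subgroup G)⁆ ≤ ⁅A, ⊤⁆ ⊔ ⁅B, ⊤⁆ :=
  commutator_top_le_iff.2 <| sup_le (commutator_top_le_iff.1 le_sup_left)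
    (commutator_top_le_iff.1 le_sup_right)

instance itComm_normal (N : Subgroup G) [N.Normal] : ∀ m, (itComm N m).Normal
  | 0 => ‹_›
  | m + 1 => have := itComm_normal N m; commutator_normal _ _

theorem itComm_mono {A B : Subgroup G} (h : A ≤ B) : ∀ m, itComm A m ≤ itComm B m
  | 0 => h
  | m + 1 => commutator_mono (itComm_mono h m) le_rfl

theorem itComm_succ_le (N : Subgroup G) [N.Normal] (m : ℕ) : itComm N (m + 1) ≤ itComm N m :=
  commutator_le_left _ _

theorem itComm_itComm (N : Subgroup G) (a : ℕ) : ∀ b, itComm (itComm N a) b = itComm N (b + a)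
  | 0 => by rw [zero_add]; rfl
  | b + 1 => by rw [Nat.add_right_comm]; exact congrArg (⁅·, ⊤⁆) (itComm_itComm N a b)

theorem itComm_bot : ∀ m, itComm (⊥ : Subgroup G) m = ⊥
  | 0 => rfl
  | m + 1 => by rw [itComm, itComm_bot m, commutator_bot_left]

theorem itComm_top : ∀ m, itComm (⊤ : Subgroup G) m = (⊤ : Subgroup G).lowerCentralSeries m
  | 0 => rfl
  | m + 1 => congrArg (⁅·, ⊤⁆) (itComm_top m)

theorem itComm_eq_bot_of_le {n m : ℕ} (hn : (⊤ : Subgroup G).lowerCentralSeries n = ⊥)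
    (hm : n ≤ m) (N : Subgroup G) : itComm N m = ⊥ :=
  eq_bot_iff.2 <| (itComm_mono le_top m).trans <|
    (itComm_top m).le.trans <| hn ▸ Subgroup.lowerCentralSeries_antitone ⊤ hm

theorem itComm_sup_le (A B : Subgroup G) [A.Normal] [B.Normal] :
    ∀ m, itComm (A ⊔ B) m ≤ itComm A m ⊔ itComm B m
  | 0 => le_rfl
  | m + 1 => (commutator_mono (itComm_sup_le A B m) le_rfl).trans (commutator_sup_top_le _ _)

end IteratedCommutator

section CommutatorPower

open scoped commutatorElement

variable {K : Type*} [Group K]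

theorem commutatorElement_pow_right_of_commute {z a : K} (h : Commute ⁅z, a⁆ a) :
    ∀ n : ℕ, ⁅z, a ^ n⁆ = ⁅z, a⁆ ^ n
  | 0 => by simp [commutatorElement_def]
  | n + 1 => by
    calc ⁅z, a ^ (n + 1)⁆ = ⁅z, a⁆ * (a * ⁅z, a ^ n⁆ * a⁻¹) := by
          simp only [commutatorElement_def, pow_succ']; group
      _ = ⁅z, a⁆ ^ (n + 1) := by
          rw [commutatorElement_pow_right_of_commute h n, ← (h.pow_left n).eq, mul_inv_cancel_right,
            ← pow_succ']

theorem commutatorElement_pow_left_of_commute {a b : K} (ha : Commute ⁅⁅a, b⁆⁻¹, a⁆ a)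
    (hb : Commute ⁅⁅a, b⁆⁻¹, a⁆ ⁅a, b⁆) :
    ∀ n : ℕ, ⁅a ^ n, b⁆ = ⁅a, b⁆ ^ n * ⁅⁅a, b⁆⁻¹, a⁆ ^ n.choose 2
  | 0 => by simp [commutatorElement_def]
  | n + 1 => by
    calc ⁅a ^ (n + 1), b⁆ = ⁅a, b⁆ * ⁅⁅a, b⁆⁻¹, a ^ n⁆ * ⁅a ^ n, b⁆ := by
          simp only [commutatorElement_def, pow_succ']; group
      _ = ⁅a, b⁆ * (⁅⁅a, b⁆⁻¹, a⁆ ^ n * ⁅a, b⁆ ^ n) * ⁅⁅a, b⁆⁻¹, a⁆ ^ n.choose 2 := by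
          rw [commutatorElement_pow_right_of_commute ha,
            commutatorElement_pow_left_of_commute ha hb n]
          group
      _ = ⁅a, b⁆ ^ (n + 1) * ⁅⁅a, b⁆⁻¹, a⁆ ^ (n + 1).choose 2 := by
          rw [((hb.pow_pow n n).eq), Nat.choose_succ_succ, Nat.choose_one_right, pow_add, pow_succ']
          group

end CommutatorPower

section PCentralStep

open Subgroup
open scoped commutatorElement

variable {G : Type*} [Group G] {p : ℕ}

/-- As `p` is odd, `p ∣ p choose 2`, so the correction term `w ^ (p choose 2)` of
`commutatorElement_pow_left_of_commute` is a `p`-th power of an element of `[X, G]`. -/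
theorem commutator_pPow_top_le (hp : Odd p) (X : Subgroup G) [X.Normal] :
    ⁅pPow p X, ⊤⁆ ≤ pPow p (itComm X 1) ⊔ itComm X 3 := by
  set T := pPow p (itComm X 1) ⊔ itComm X 3
  rw [commutator_top_le_iff, pPow_le_iff]
  intro x hx y
  obtain ⟨k, rfl⟩ := hp
  have hz : ⁅x, y⁆ ∈ itComm X 1 := commutator_mem_commutator hx (mem_top y)
  have hw : ⁅⁅x, y⁆⁻¹, x⁆ ∈ itComm X 2 := commutator_mem_commutator (inv_mem hz) (mem_top x)
  have hchoose : (2 * k + 1).choose 2 = k * (2 * k + 1) := by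
    rw [Nat.choose_two_right, Nat.add_sub_cancel, Nat.mul_comm, Nat.mul_assoc,
      Nat.mul_div_cancel_left _ two_pos]
  let π := QuotientGroup.mk' T
  have hcentral : π ⁅⁅x, y⁆⁻¹, x⁆ ∈ center (G ⧸ T) :=
    (Subgroup.upperCentralSeriesStep_eq_comap_center T).le
      fun g => mem_sup_right (commutator_mem_commutator hw (mem_top g))
  have hcomm (g : G ⧸ T) : Commute ⁅⁅π x, π y⁆⁻¹, π x⁆ g := by
    have := (mem_center_iff.1 hcentral g).symm
    rwa [map_commutatorElement, map_inv, map_commutatorElement] at this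
  have hkill {g : G} (hg : g ∈ itComm X 1) : π g ^ (2 * k + 1) = 1 := by
    rw [← map_pow, QuotientGroup.mk'_apply, QuotientGroup.eq_one_iff]
    exact mem_sup_left (pow_mem_pPow hg)
  rw [← QuotientGroup.eq_one_iff, ← QuotientGroup.mk'_apply, map_commutatorElement, map_pow,
    commutatorElement_pow_left_of_commute (hcomm _) (hcomm _), hchoose, pow_mul,
    ← map_commutatorElement, hkill hz, one_mul, ← map_inv,
    ← map_commutatorElement, ← map_pow, hkill (itComm_succ_le X 1 (pow_mem hw k))]

theorem itComm_pPow_le (hp : Odd p) (X : Subgroup G) [X.Normal] (m : ℕ) :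
    itComm (pPow p X) m ≤ pPow p (itComm X m) ⊔ itComm X (m + 2) := by
  induction m generalizing X with
  | zero => exact le_sup_left
  | succ m ih =>
    rw [← itComm_itComm]
    refine (itComm_mono (commutator_pPow_top_le hp X) m).trans <|
      (itComm_sup_le _ _ m).trans <| sup_le ((ih _).trans ?_) ?_
    · rw [itComm_itComm, itComm_itComm]
    · rw [itComm_itComm]
      exact le_sup_right

/-- `λ(X) = X^p [X, G]`, one step of the lower exponent-`p` central series. -/
def pCentralStep (p : ℕ) (X : Subgroup G) : Subgroup G :=
  pPow p X ⊔ ⁅X, ⊤⁆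

instance pCentralStep_normal (X : Subgroup G) [X.Normal] : (pCentralStep p X).Normal :=
  sup_normal _ _

theorem pCentralStep_le_self (X : Subgroup G) [X.Normal] : pCentralStep p X ≤ X :=
  sup_le (pPow_le_self X) (commutator_le_left X ⊤)

theorem pCentralStep_mono : Monotone (pCentralStep (G := G) p) :=
  fun _ _ h => sup_le_sup (pPow_mono_s12 h) (commutator_mono h le_rfl)

theorem commutator_top_le_pCentralStep (X : Subgroup G) : ⁅X, ⊤⁆ ≤ pCentralStep p X :=
  le_sup_right

theorem itComm_pCentralStep_le (hp : Odd p) (X : Subgroup G) [X.Normal] (m : ℕ) :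
    itComm (pCentralStep p X) m ≤ pPow p (itComm X m) ⊔ itComm X (m + 1) := by
  refine (itComm_sup_le _ _ m).trans (sup_le ((itComm_pPow_le hp X m).trans ?_) ?_)
  · exact sup_le_sup_left (itComm_succ_le X _) _
  · rw [← itComm_itComm]
    exact le_sup_right

/-- Inductively `X ≤ γₖ`: modulo `γₖ₊₁` the image of `X` is abelian and consists of `p`-th powers,
hence trivial. -/
theorem eq_bot_of_le_pCentralStep [Finite G] (hp : p.Prime) (hG : IsPGroup p G)
    {X : Subgroup G} [X.Normal] (h : X ≤ pCentralStep p X) : X = ⊥ := by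
  have : Fact p.Prime := ⟨hp⟩
  obtain ⟨n, hn⟩ := Subgroup.nilpotent_iff_lowerCentralSeries.1 hG.isNilpotent
  suffices ∀ k, X ≤ (⊤ : Subgroup G).lowerCentralSeries k from eq_bot_iff.2 (hn ▸ this n)
  intro k
  induction k with
  | zero => exact le_top
  | succ k ih =>
    set Γ := (⊤ : Subgroup G).lowerCentralSeries (k + 1)
    have hXΓ : ⁅X, ⊤⁆ ≤ Γ := commutator_mono ih le_rfl
    let π := QuotientGroup.mk' Γ
    have hA : ∀ a ∈ X.map π, ∀ b ∈ X.map π, Commute a b := by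
      rintro - ⟨u, hu, rfl⟩ - ⟨v, -, rfl⟩
      rw [← commutatorElement_eq_one_iff_commute, ← map_commutatorElement, QuotientGroup.mk'_apply,
        QuotientGroup.eq_one_iff]
      exact commutator_mem_commutator (ih hu) (mem_top v)
    have hle : X.map π ≤ pPow p (X.map π) := by
      have hbot : ⁅X, (⊤ : Subgroup G)⁆.map π = ⊥ :=
        (Subgroup.map_eq_bot_iff _).2 (by rw [QuotientGroup.ker_mk']; exact hXΓ)
      have := map_mono (f := π) h
      rwa [pCentralStep, Subgroup.map_sup, map_pPow, hbot, sup_bot_eq] at this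
    have := eq_bot_of_le_pPow_of_commute hp (hG.to_quotient Γ) hA hle
    rwa [Subgroup.map_eq_bot_iff, QuotientGroup.ker_mk'] at this

end PCentralStep

section EtaSeries

open Subgroup

variable {G : Type*} [Group G] {p : ℕ}

theorem etaUp_zero : etaUp p G 0 = ⊥ := rfl

theorem le_etaUp_succ {N : Subgroup G} {i : ℕ} (hN : N.Normal)
    (h : ⁅N, ⊤⁆ ≤ pPow p N ⊔ etaUp p G i) : N ≤ etaUp p G (i + 1) :=
  le_sSup ⟨hN, h⟩

theorem etaUp_le_succ (i : ℕ) : etaUp p G i ≤ etaUp p G (i + 1) :=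
  le_etaUp_succ inferInstance ((commutator_le_left _ _).trans le_sup_right)

theorem etaUp_monotone : Monotone (etaUp p G) :=
  monotone_nat_of_le_succ etaUp_le_succ

theorem commutator_etaUp_succ_le (i : ℕ) :
    ⁅etaUp p G (i + 1), ⊤⁆ ≤ pPow p (etaUp p G (i + 1)) ⊔ etaUp p G i := by
  rw [commutator_top_le_iff]
  refine sSup_le fun N ⟨hN, h⟩ => commutator_top_le_iff.1 (h.trans ?_)
  exact sup_le_sup_right (pPow_mono_s12 (le_etaUp_succ hN h)) _

theorem upperCentralSeries_le_etaUp : ∀ n, Subgroup.upperCentralSeries G n ≤ etaUp p G n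
  | 0 => le_rfl
  | n + 1 => le_etaUp_succ inferInstance <|
      (Subgroup.commutator_upperCentralSeries_top_le G n).trans <|
        (upperCentralSeries_le_etaUp n).trans le_sup_right

theorem etaUp_pwc [Group.IsNilpotent G] : etaUp p G (pwc p G) = ⊤ := by
  obtain ⟨n, hn⟩ := Group.IsNilpotent.nilpotent G
  exact Nat.sInf_mem (s := {k | etaUp p G k = ⊤})
    ⟨n, top_le_iff.1 (hn ▸ upperCentralSeries_le_etaUp n)⟩

end EtaSeries

section EtaFiltration

open Subgroup

variable {G : Type*} [Group G] {p : ℕ}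

def etaFiltration (p : ℕ) (G : Type*) [Group G] (c : ℕ) : ℕ → Subgroup G
  | 0 => etaUp p G c
  | i + 1 => pCentralStep p (etaFiltration p G c i) ⊔ etaUp p G (c - (i + 1))

instance etaFiltration_normal (c : ℕ) : ∀ i, (etaFiltration p G c i).Normal
  | 0 => inferInstanceAs (etaUp p G c).Normal
  | i + 1 => have := etaFiltration_normal c i; sup_normal _ _

theorem etaUp_le_etaFiltration (c : ℕ) : ∀ i, etaUp p G (c - i) ≤ etaFiltration p G c i
  | 0 => le_rfl
  | _ + 1 => le_sup_right

theorem etaFiltration_succ_le (c i : ℕ) :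
    etaFiltration p G c (i + 1) ≤ etaFiltration p G c i :=
  sup_le (pCentralStep_le_self _) ((etaUp_monotone (by omega)).trans (etaUp_le_etaFiltration c i))

theorem etaFiltration_antitone (c : ℕ) : Antitone (etaFiltration p G c) :=
  antitone_nat_of_succ_le (etaFiltration_succ_le c)

theorem commutator_etaFiltration_le (c i : ℕ) :
    ⁅etaFiltration p G c i, ⊤⁆ ≤ etaFiltration p G c (i + 1) :=
  (commutator_top_le_pCentralStep _).trans le_sup_left

theorem itComm_etaFiltration_le (c i : ℕ) :
    ∀ m, itComm (etaFiltration p G c i) m ≤ etaFiltration p G c (i + m)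
  | 0 => le_rfl
  | m + 1 => (commutator_mono (itComm_etaFiltration_le c i m) le_rfl).trans
      (commutator_etaFiltration_le c (i + m))

theorem etaFiltration_succ_of_le {c i : ℕ} (h : c ≤ i) :
    etaFiltration p G c (i + 1) = pCentralStep p (etaFiltration p G c i) := by
  rw [etaFiltration, Nat.sub_eq_zero_of_le (by omega), etaUp_zero, sup_bot_eq]

theorem etaFiltration_zero_left : ∀ i, etaFiltration p G 0 i = ⊥
  | 0 => rfl
  | i + 1 => by
    rw [etaFiltration_succ_of_le (Nat.zero_le i), etaFiltration_zero_left i]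
    exact eq_bot_iff.2 (pCentralStep_le_self ⊥)

theorem etaFiltration_le_succ_succ (c : ℕ) :
    ∀ i, etaFiltration p G c i ≤ etaFiltration p G (c + 1) (i + 1)
  | 0 => le_sup_right
  | i + 1 => sup_le_sup (pCentralStep_mono (etaFiltration_le_succ_succ c i))
      (etaUp_monotone (by omega))

theorem etaFiltration_sub_le (c : ℕ) :
    ∀ k i, etaFiltration p G (c - k) i ≤ etaFiltration p G c (i + k)
  | 0, _ => le_rfl
  | k + 1, i => by
    rcases Nat.lt_or_ge k c with hk | hk
    · have hc : c - (k + 1) + 1 = c - k := by omega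
      calc etaFiltration p G (c - (k + 1)) i
          ≤ etaFiltration p G (c - k) (i + 1) := hc ▸ etaFiltration_le_succ_succ _ i
        _ ≤ etaFiltration p G c (i + (k + 1)) :=
          (etaFiltration_sub_le c k (i + 1)).trans_eq (by rw [Nat.add_right_comm, Nat.add_assoc])
    · rw [Nat.sub_eq_zero_of_le (by omega), etaFiltration_zero_left]
      exact bot_le

theorem exists_etaFiltration_eq_bot [Finite G] (hp : p.Prime) (hG : IsPGroup p G) (c : ℕ) :
    ∃ s, etaFiltration p G c s = ⊥ := by
  obtain ⟨n, hn⟩ := WellFoundedLT.antitone_chain_condition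
    (f := fun n => etaFiltration p G c (c + n)) fun _ _ hab => etaFiltration_antitone c (by omega)
  refine ⟨c + n, eq_bot_of_le_pCentralStep hp hG ?_⟩
  rw [← etaFiltration_succ_of_le (by omega)]
  exact (hn (n + 1) (by omega)).le

theorem pPow_etaFiltration_sup_etaUp_le {c i i' e e' : ℕ} (hi : i ≤ i') (he : e' ≤ e) :
    pPow p (etaFiltration p G c i') ⊔ etaUp p G e' ≤
      pPow p (etaFiltration p G c i) ⊔ etaUp p G e :=
  sup_le_sup (pPow_mono_s12 (etaFiltration_antitone c hi)) (etaUp_monotone he)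

end EtaFiltration

section PotentFiltration

open Subgroup

variable {G : Type*} [Group G] [Group.IsNilpotent G] {p : ℕ}

/-- Induction on `j`, and for fixed `j` downwards on `m`: the term `[η_j, (m+3)G]` coming from
`itComm_pPow_le` is the case `m + 2`, which is trivial once `γ_{m+3} = 1`. -/
theorem itComm_etaUp_le (hp : Odd p) (j m : ℕ) :
    itComm (etaUp p G j) (m + 1) ≤ pPow p (etaFiltration p G j m) ⊔ etaUp p G (j - (m + 1)) := by
  obtain ⟨n, hn⟩ := Subgroup.nilpotent_iff_lowerCentralSeries.1 ‹Group.IsNilpotent G›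
  induction j generalizing m with
  | zero => rw [etaUp_zero, itComm_bot]; exact bot_le
  | succ j ihj =>
    suffices ∀ d m, n ≤ m + d → itComm (etaUp p G (j + 1)) (m + 1) ≤
        pPow p (etaFiltration p G (j + 1) m) ⊔ etaUp p G (j + 1 - (m + 1)) from
      this n m (by omega)
    intro d
    induction d with
    | zero => intro m hm; rw [itComm_eq_bot_of_le hn (by omega)]; exact bot_le
    | succ d ihd =>
      rintro (_ | m) hm
      · exact commutator_etaUp_succ_le j
      · rw [← itComm_itComm _ 1]
        refine (itComm_mono (commutator_etaUp_succ_le j) _).trans <|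
          (itComm_sup_le _ _ _).trans <|
            sup_le ((itComm_pPow_le hp _ _).trans (sup_le ?_ ?_)) ((ihj m).trans ?_)
        · refine le_sup_of_le_left (pPow_mono_s12 ?_)
          exact (itComm_etaFiltration_le (j + 1) 0 (m + 1)).trans_eq (by rw [zero_add])
        · exact (ihd (m + 2) (by omega)).trans
            (pPow_etaFiltration_sup_etaUp_le (by omega) (by omega))
        · exact sup_le_sup (pPow_mono_s12 (etaFiltration_le_succ_succ j m)) (etaUp_monotone (by omega))

theorem itComm_etaFiltration_succ_le (hp : Odd p) (c i m : ℕ) :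
    itComm (etaFiltration p G c i) (m + 1) ≤
      pPow p (etaFiltration p G c (i + m)) ⊔ etaUp p G (c - (i + m + 1)) := by
  induction i generalizing m with
  | zero => simp only [Nat.zero_add]; exact itComm_etaUp_le (G := G) hp c m
  | succ i ih =>
    refine (itComm_sup_le _ _ _).trans <| sup_le
      ((itComm_pCentralStep_le hp _ _).trans (sup_le ?_ ?_)) ((itComm_etaUp_le hp _ m).trans ?_)
    · refine le_sup_of_le_left (pPow_mono_s12 ((itComm_etaFiltration_le c i (m + 1)).trans_eq ?_))
      rw [Nat.add_right_comm, Nat.add_assoc]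
    · refine (ih (m + 1)).trans_eq ?_
      rw [Nat.add_right_comm i 1 m, Nat.add_assoc i m 1]
    · refine sup_le_sup (pPow_mono_s12 ((etaFiltration_sub_le c (i + 1) m).trans_eq ?_))
        (etaUp_monotone (by omega))
      rw [Nat.add_comm]

end PotentFiltration

/-- every finite `p`-group of powerful class less than `p` is a PF-group. -/
theorem small_pwc_PFGroup {p : ℕ} (hp : p.Prime) (hodd : Odd p)
    {G : Type*} [Group G] [Finite G] (hG : IsPGroup p G) (hsmall : pwc p G < p) :
    PFEmbedded p (⊤ : Subgroup G) := by
  have : Fact p.Prime := ⟨hp⟩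
  have : Group.IsNilpotent G := hG.isNilpotent
  have hp3 : 3 ≤ p := by obtain ⟨k, rfl⟩ := hodd; have := hp.two_le; omega
  set c := pwc p G
  obtain ⟨s, hs⟩ := exists_etaFiltration_eq_bot hp hG c
  refine ⟨s, etaFiltration p G c, etaUp_pwc, hs, etaFiltration_succ_le c,
    etaFiltration_normal c, commutator_etaFiltration_le c, fun i => ?_⟩
  calc itComm (etaFiltration p G c i) (p - 1)
      ≤ pPow p (etaFiltration p G c (i + (p - 2))) ⊔ etaUp p G (c - (i + (p - 2) + 1)) := by
        have := itComm_etaFiltration_succ_le (G := G) hodd c i (p - 2)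
        rwa [show p - 2 + 1 = p - 1 by omega] at this
    _ = pPow p (etaFiltration p G c (i + (p - 2))) := by
        rw [Nat.sub_eq_zero_of_le (show c ≤ i + (p - 2) + 1 by omega), etaUp_zero, sup_bot_eq]
    _ ≤ pPow p (etaFiltration p G c (i + 1)) := pPow_mono_s12 (etaFiltration_antitone c (by omega))
end
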